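/- arXiv:2309.08328 — 4 statements merged into one kernel-verified Lean document; each statement's English description precedes it below -/
import Mathlib

section
/- Let a countable discrete group Γ act partially on a set X via partial bijections θ_γ : D_γ → D_{γ⁻¹}. Let F ⊆ Γ be a finite symmetric subset containing the identity, and let A, B ⊆ X. Suppose that every F^{r_A}-component of A is F^{R_A}-bounded, every F^{r_B}-component of B is F^{R_B}-bounded, and 2R_B + 2r_B < r_A. Then every F^{r_B}-component of A ∪ B is F^{r_A + R_A}-bounded. -/
open Pointwise

/-- Step relation of an `F`-chain within `B` for a partial action given by
domains `D` and partial maps `θ`. -/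
def PAStep {Γ X : Type*} (D : Γ → Set X) (θ : Γ → X → X) (F : Set Γ) (B : Set X)
    (x y : X) : Prop :=
  x ∈ B ∧ y ∈ B ∧ ∃ f ∈ F, x ∈ D f ∧ y = θ f x

/-- The `F`-component of `x` in `B`. -/
def PAComp {Γ X : Type*} (D : Γ → Set X) (θ : Γ → X → X) (F : Set Γ) (B : Set X)
    (x : X) : Set X :=
  {y | Relation.ReflTransGen (PAStep D θ F B) x y}

/-- A set `Y` is `S`-bounded if `Y ⊆ {θ s x | s ∈ S, x ∈ D s}` for a single point `x`. -/
def PABounded {Γ X : Type*} (D : Γ → Set X) (θ : Γ → X → X) (S : Set Γ) (Y : Set X) : Prop :=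
  ∃ x : X, Y ⊆ {y | ∃ s ∈ S, x ∈ D s ∧ y = θ s x}

private lemma set_pow_mono_pa {Γ : Type*} [Group Γ] {S : Set Γ} (h1 : (1:Γ) ∈ S)
    {m n : ℕ} (h : m ≤ n) : S ^ m ⊆ S ^ n := by
  induction n, h using Nat.le_induction with
  | base => exact subset_rfl
  | succ n hmn ih =>
    refine ih.trans ?_
    intro x hx
    have := Set.mul_mem_mul hx h1
    rwa [mul_one, ← pow_succ] at this

private lemma set_inv_mem_pow_pa {Γ : Type*} [Group Γ] {S : Set Γ}
    (hsym : ∀ s ∈ S, s⁻¹ ∈ S) :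
    ∀ {n : ℕ} {g : Γ}, g ∈ S ^ n → g⁻¹ ∈ S ^ n := by
  intro n
  induction n with
  | zero =>
    intro g hg
    simp only [pow_zero, Set.mem_one] at hg ⊢
    simp [hg]
  | succ n ih =>
    intro g hg
    rw [pow_succ] at hg
    rcases hg with ⟨a, ha, b, hb, rfl⟩
    rw [mul_inv_rev, pow_succ']
    exact Set.mul_mem_mul (hsym b hb) (ih ha)

private lemma pa_reach_trans {Γ X : Type*} [Group Γ] {D : Γ → Set X} {θ : Γ → X → X}
    (hcomp : ∀ (γ l : Γ) (x : X), x ∈ D l → θ l x ∈ D γ →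
      x ∈ D (γ * l) ∧ θ γ (θ l x) = θ (γ * l) x)
    {S : Set Γ} {m n : ℕ} {x y z : X}
    (h1 : ∃ g ∈ S ^ m, x ∈ D g ∧ y = θ g x)
    (h2 : ∃ g ∈ S ^ n, y ∈ D g ∧ z = θ g y) :
    ∃ g ∈ S ^ (m + n), x ∈ D g ∧ z = θ g x := by
  obtain ⟨g, hg, hxg, rfl⟩ := h1
  obtain ⟨h, hh, hyh, rfl⟩ := h2
  obtain ⟨hdom, heq⟩ := hcomp h g x hxg hyh
  refine ⟨h * g, ?_, hdom, heq⟩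
  rw [add_comm, pow_add]
  exact Set.mul_mem_mul hh hg

private lemma pa_reach_symm {Γ X : Type*} [Group Γ] {D : Γ → Set X} {θ : Γ → X → X}
    (hθ1 : ∀ x : X, θ 1 x = x)
    (hbij : ∀ γ : Γ, Set.BijOn (θ γ) (D γ) (D γ⁻¹))
    (hcomp : ∀ (γ l : Γ) (x : X), x ∈ D l → θ l x ∈ D γ →
      x ∈ D (γ * l) ∧ θ γ (θ l x) = θ (γ * l) x)
    {S : Set Γ} (hsym : ∀ s ∈ S, s⁻¹ ∈ S) {n : ℕ} {x y : X}
    (h : ∃ g ∈ S ^ n, x ∈ D g ∧ y = θ g x) :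
    ∃ g ∈ S ^ n, y ∈ D g ∧ x = θ g y := by
  obtain ⟨g, hg, hxg, rfl⟩ := h
  have hmem : θ g x ∈ D g⁻¹ := (hbij g).mapsTo hxg
  obtain ⟨_, heq⟩ := hcomp g⁻¹ g x hxg hmem
  rw [inv_mul_cancel, hθ1] at heq
  exact ⟨g⁻¹, set_inv_mem_pow_pa hsym hg, hmem, heq.symm⟩

private lemma pa_comp_mem {Γ X : Type*} {D : Γ → Set X} {θ : Γ → X → X}
    {F : Set Γ} {B : Set X} {u v : X}
    (h : Relation.ReflTransGen (PAStep D θ F B) u v) (hu : u ∈ B) : v ∈ B := by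
  induction h with
  | refl => exact hu
  | tail _ st _ => exact st.2.1

/-- Finite union lemma for the dynamic asymptotic dimension (Lemma on unions). -/
theorem finite_union_lemma {Γ X : Type*} [Group Γ] [Countable Γ]
    (D : Γ → Set X) (θ : Γ → X → X)
    (hD1 : D 1 = Set.univ) (hθ1 : ∀ x : X, θ 1 x = x)
    (hbij : ∀ γ : Γ, Set.BijOn (θ γ) (D γ) (D γ⁻¹))
    (hcomp : ∀ (γ l : Γ) (x : X), x ∈ D l → θ l x ∈ D γ →
      x ∈ D (γ * l) ∧ θ γ (θ l x) = θ (γ * l) x)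
    (F : Finset Γ) (hFe : (1 : Γ) ∈ F) (hFsym : ∀ f ∈ F, f⁻¹ ∈ F)
    (A B : Set X) (rA RA rB RB : ℕ)
    (hA : ∀ x ∈ A, PABounded D θ ((F : Set Γ) ^ RA) (PAComp D θ ((F : Set Γ) ^ rA) A x))
    (hB : ∀ x ∈ B, PABounded D θ ((F : Set Γ) ^ RB) (PAComp D θ ((F : Set Γ) ^ rB) B x))
    (hlt : 2 * RB + 2 * rB < rA) :
    ∀ x ∈ A ∪ B, PABounded D θ ((F : Set Γ) ^ (rA + RA))
      (PAComp D θ ((F : Set Γ) ^ rB) (A ∪ B) x) := by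
  set S : Set Γ := (F : Set Γ) with hSdef
  have h1S : (1 : Γ) ∈ S := hFe
  have hsymS : ∀ s ∈ S, s⁻¹ ∈ S := fun s hs => hFsym s hs
  have hsymPow : ∀ {n : ℕ} {g : Γ}, g ∈ S ^ n → g⁻¹ ∈ S ^ n :=
    fun hg => set_inv_mem_pow_pa hsymS hg
  -- symmetry of the step relation
  have step_symm : ∀ {n : ℕ} {C : Set X}, Symmetric (PAStep D θ (S ^ n) C) := by
    intro n C x y ⟨hx, hy, hr⟩
    exact ⟨hy, hx, pa_reach_symm hθ1 hbij hcomp hsymS hr⟩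
  intro x hx
  by_cases hAC : ∃ a ∈ PAComp D θ (S ^ rB) (A ∪ B) x, a ∈ A
  · -- the component meets A
    obtain ⟨a, haC, haA⟩ := hAC
    obtain ⟨z, hz⟩ := hA a haA
    -- membership in A along A-components
    have memA : ∀ {u v : X}, Relation.ReflTransGen (PAStep D θ (S ^ rA) A) u v →
        u ∈ A → v ∈ A := fun h hu => pa_comp_mem h hu
    -- key invariant along chains starting at `a`
    have key : ∀ y : X, Relation.ReflTransGen (PAStep D θ (S ^ rB) (A ∪ B)) a y →
        (y ∈ PAComp D θ (S ^ rA) A a) ∨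
        (∃ a' b : X, a' ∈ PAComp D θ (S ^ rA) A a ∧ a' ∈ A ∧ b ∈ B ∧
          (∃ g ∈ S ^ rB, a' ∈ D g ∧ b = θ g a') ∧
          y ∈ PAComp D θ (S ^ rB) B b) := by
      intro y hy
      induction hy with
      | refl => exact Or.inl Relation.ReflTransGen.refl
      | @tail b c hprev st ih =>
        obtain ⟨hbAB, hcAB, f, hf, hbD, hceq⟩ := st
        rcases ih with hbA' | ⟨a', b₀, ha'C, ha'A, hb₀B, hr, hbComp⟩
        · have hbA : b ∈ A := memA hbA' haA
          by_cases hcA : c ∈ A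
          · exact Or.inl (hbA'.tail ⟨hbA, hcA, f,
              set_pow_mono_pa h1S (by omega : rB ≤ rA) hf, hbD, hceq⟩)
          · have hcB : c ∈ B := hcAB.resolve_left hcA
            exact Or.inr ⟨b, c, hbA', hbA, hcB, ⟨f, hf, hbD, hceq⟩,
              Relation.ReflTransGen.refl⟩
        · have hbB : b ∈ B := pa_comp_mem hbComp hb₀B
          by_cases hcA : c ∈ A
          · -- close off the B-run: b₀ and b are both within `RB` of a common point
            obtain ⟨w, hw⟩ := hB b₀ hb₀B
            obtain ⟨s, hs, hws, hbeq⟩ := hw hbComp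
            obtain ⟨t, ht, hwt, hb₀eq⟩ := hw Relation.ReflTransGen.refl
            have r1 : ∃ g ∈ S ^ RB, w ∈ D g ∧ b = θ g w := ⟨s, hs, hws, hbeq⟩
            have r2 : ∃ g ∈ S ^ RB, b₀ ∈ D g ∧ w = θ g b₀ :=
              pa_reach_symm hθ1 hbij hcomp hsymS ⟨t, ht, hwt, hb₀eq⟩
            have r3 : ∃ g ∈ S ^ (rB + (RB + RB) + rB), a' ∈ D g ∧ c = θ g a' :=
              pa_reach_trans hcomp (pa_reach_trans hcomp hr
                (pa_reach_trans hcomp r2 r1)) ⟨f, hf, hbD, hceq⟩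
            obtain ⟨g, hg, hgD, hgeq⟩ := r3
            have hg' : g ∈ S ^ rA := set_pow_mono_pa h1S (by omega) hg
            exact Or.inl (ha'C.tail ⟨ha'A, hcA, g, hg', hgD, hgeq⟩)
          · have hcB : c ∈ B := hcAB.resolve_left hcA
            exact Or.inr ⟨a', b₀, ha'C, ha'A, hb₀B, hr,
              hbComp.tail ⟨hbB, hcB, f, hf, hbD, hceq⟩⟩
    refine ⟨z, ?_⟩
    intro y hy
    -- chain from a to y
    have hxa : Relation.ReflTransGen (PAStep D θ (S ^ rB) (A ∪ B)) a x :=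
      (@Relation.ReflTransGen.stdSymm _ _ ⟨step_symm⟩).symm _ _ haC
    have hay : Relation.ReflTransGen (PAStep D θ (S ^ rB) (A ∪ B)) a y :=
      hxa.trans hy
    rcases key y hay with hyA | ⟨a', b₀, ha'C, _, hb₀B, hr, hyComp⟩
    · obtain ⟨s, hs, hzs, hyeq⟩ := hz hyA
      exact ⟨s, set_pow_mono_pa h1S (by omega : RA ≤ rA + RA) hs, hzs, hyeq⟩
    · obtain ⟨s, hs, hzs, ha'eq⟩ := hz ha'C
      obtain ⟨w, hw⟩ := hB b₀ hb₀B
      obtain ⟨u, hu, hwu, hyeq⟩ := hw hyComp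
      obtain ⟨t, ht, hwt, hb₀eq⟩ := hw Relation.ReflTransGen.refl
      have r2 : ∃ g ∈ S ^ RB, b₀ ∈ D g ∧ w = θ g b₀ :=
        pa_reach_symm hθ1 hbij hcomp hsymS ⟨t, ht, hwt, hb₀eq⟩
      have r3 : ∃ g ∈ S ^ (RA + rB + RB + RB), z ∈ D g ∧ y = θ g z :=
        pa_reach_trans hcomp (pa_reach_trans hcomp
          (pa_reach_trans hcomp ⟨s, hs, hzs, ha'eq⟩ hr) r2) ⟨u, hu, hwu, hyeq⟩
      obtain ⟨g, hg, hgD, hgeq⟩ := r3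
      exact ⟨g, set_pow_mono_pa h1S (by omega) hg, hgD, hgeq⟩
  · -- the component is contained in B
    push_neg at hAC
    have hxB : x ∈ B := by
      rcases hx with hxA | hxB
      · exact absurd hxA (hAC x Relation.ReflTransGen.refl)
      · exact hxB
    have hsub : PAComp D θ (S ^ rB) (A ∪ B) x ⊆ PAComp D θ (S ^ rB) B x := by
      intro y hy
      induction hy with
      | refl => exact Relation.ReflTransGen.refl
      | @tail b c hprev st ih =>
        have hbB : b ∈ B := (st.1).resolve_left (hAC b hprev)
        have hcB : c ∈ B := (st.2.1).resolve_left (hAC c (hprev.tail st))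
        exact ih.tail ⟨hbB, hcB, st.2.2⟩
    obtain ⟨w, hw⟩ := hB x hxB
    refine ⟨w, ?_⟩
    intro y hy
    obtain ⟨s, hs, hws, hyeq⟩ := hw (hsub hy)
    exact ⟨s, set_pow_mono_pa h1S (by omega : RB ≤ rA + RA) hs, hws, hyeq⟩
end

section
/- Let Γ be a countable group acting freely by homeomorphisms on a compact metric space X. Let F, S be finite symmetric subsets of Γ containing the identity, and let U ⊆ X be closed with all F-components S-bounded (every F-component of U is contained in S·x for some x). Then there exists ε > 0 such that the F-components of the open ε-neighborhood N_ε(U) are also S-bounded. -/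
/-- The `F`-component of `x` in `A ⊆ X` for a group action: points of `A` reachable
from `x` by chains in `A` with steps `a ↦ f • a`, `f ∈ F`. -/
def AComp {Γ X : Type*} [SMul Γ X] (F : Set Γ) (A : Set X) (x : X) : Set X :=
  {y | Relation.ReflTransGen (fun a b => a ∈ A ∧ b ∈ A ∧ ∃ f ∈ F, b = f • a) x y}

/-- A set `Y ⊆ X` is `S`-bounded if `Y ⊆ S • z` for a single point `z`. -/
def SBdd {Γ X : Type*} [SMul Γ X] (S : Set Γ) (Y : Set X) : Prop :=
  ∃ z : X, Y ⊆ (fun s : Γ => s • z) '' S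

namespace Stmt3Aux

variable {Γ X : Type*} [Group Γ] [MulAction Γ X]

/-- Product of a chain-word, applied right-to-left. -/
def wrd : List Γ → Γ
  | [] => 1
  | f :: l => wrd l * f

@[simp] lemma wrd_nil : wrd ([] : List Γ) = 1 := rfl
@[simp] lemma wrd_cons (f : Γ) (l : List Γ) : wrd (f :: l) = wrd l * f := rfl

lemma wrd_append (a b : List Γ) : wrd (a ++ b) = wrd b * wrd a := by
  induction a with
  | nil => simp
  | cons f a ih => simp [ih, mul_assoc]

/-- `ok F A l x`: the chain starting at `x` with steps `l` stays in `A`,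
with all steps in `F`. -/
def ok (F : Set Γ) (A : Set X) : List Γ → X → Prop
  | [], x => x ∈ A
  | f :: l, x => x ∈ A ∧ f ∈ F ∧ ok F A l (f • x)

lemma ok.mem {F : Set Γ} {A : Set X} {l : List Γ} {x : X} (h : ok F A l x) : x ∈ A := by
  cases l with
  | nil => exact h
  | cons f l => exact h.1

lemma ok_append {F : Set Γ} {A : Set X} (a b : List Γ) (x : X) :
    ok F A (a ++ b) x ↔ ok F A a x ∧ ok F A b (wrd a • x) := by
  induction a generalizing x with
  | nil =>
    simp only [List.nil_append, wrd_nil, one_smul]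
    exact ⟨fun h => ⟨h.mem, h⟩, fun h => h.2⟩
  | cons f a ih =>
    show (x ∈ A ∧ f ∈ F ∧ ok F A (a ++ b) (f • x)) ↔ _
    rw [ih]
    constructor
    · rintro ⟨h1, h2, h3, h4⟩
      exact ⟨⟨h1, h2, h3⟩, by rwa [wrd_cons, mul_smul]⟩
    · rintro ⟨⟨h1, h2, h3⟩, h4⟩
      exact ⟨h1, h2, h3, by rwa [wrd_cons, mul_smul] at h4⟩

lemma ok.steps {F : Set Γ} {A : Set X} {l : List Γ} {x : X} (h : ok F A l x) :
    ∀ f ∈ l, f ∈ F := by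
  induction l generalizing x with
  | nil => simp
  | cons f l ih =>
    intro g hg
    rcases List.mem_cons.1 hg with rfl | hg
    · exact h.2.1
    · exact ih h.2.2 g hg

lemma ok.end_mem {F : Set Γ} {A : Set X} {l : List Γ} {x : X} (h : ok F A l x) :
    wrd l • x ∈ A := by
  induction l generalizing x with
  | nil => simpa [ok] using h
  | cons f l ih =>
    rw [wrd_cons, mul_smul]
    exact ih h.2.2

lemma exists_list_of_mem_AComp {F : Set Γ} {A : Set X} {x y : X} (hx : x ∈ A)
    (h : y ∈ AComp F A x) : ∃ l, ok F A l x ∧ wrd l • x = y := by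
  induction h with
  | refl => exact ⟨[], hx, one_smul _ _⟩
  | tail hab hby ih =>
    obtain ⟨l, hl, hend⟩ := ih
    obtain ⟨hbA, hyA, f, hf, hy⟩ := hby
    refine ⟨l ++ [f], ?_, ?_⟩
    · rw [ok_append]
      refine ⟨hl, ⟨by rwa [hend], hf, ?_⟩⟩
      show (f • (wrd l • x)) ∈ A
      rw [hend, ← hy]; exact hyA
    · rw [wrd_append, wrd_cons, wrd_nil, one_mul, mul_smul, hend, ← hy]

lemma smul_mem_AComp {F : Set Γ} {A : Set X} {l : List Γ} {x : X} (h : ok F A l x) :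
    wrd l • x ∈ AComp F A x := by
  induction l generalizing x with
  | nil => simpa [AComp] using Relation.ReflTransGen.refl
  | cons f l ih =>
    obtain ⟨hx, hf, hrest⟩ := h
    have h2 := ih hrest
    have step : Relation.ReflTransGen
        (fun a b => a ∈ A ∧ b ∈ A ∧ ∃ g ∈ F, b = g • a) x (f • x) :=
      Relation.ReflTransGen.single ⟨hx, hrest.mem, f, hf, rfl⟩
    have : wrd (f :: l) • x = wrd l • (f • x) := by rw [wrd_cons, mul_smul]
    rw [this]
    exact Relation.ReflTransGen.trans step h2


lemma shorten {F : Set Γ} {A : Set X} (T : Finset Γ) :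
    ∀ (n : ℕ) (l : List Γ) (x : X), l.length ≤ n → ok F A l x → wrd l ∉ (T : Set Γ) →
    ∃ l', l'.length ≤ T.card ∧ ok F A l' x ∧ wrd l' ∉ (T : Set Γ) := by
  intro n
  induction n with
  | zero =>
    intro l x hlen h hT
    exact ⟨l, by omega, h, hT⟩
  | succ n ih =>
    intro l x hlen h hT
    by_cases hc : l.length ≤ T.card
    · exact ⟨l, hc, h, hT⟩
    push_neg at hc
    by_cases hpre : ∃ i < l.length, wrd (l.take i) ∉ (T : Set Γ)
    · obtain ⟨i, hi, hw⟩ := hpre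
      have hok : ok F A (l.take i) x := by
        have := (ok_append (l.take i) (l.drop i) x).1 (by rwa [List.take_append_drop])
        exact this.1
      exact ih (l.take i) x (by simp [List.length_take]; omega) hok hw
    · push_neg at hpre
      have hmaps : ∀ i ∈ Finset.range l.length, wrd (l.take i) ∈ T := fun i hi =>
        hpre i (Finset.mem_range.1 hi)
      obtain ⟨i, hi, j, hj, hne, heq⟩ :=
        Finset.exists_ne_map_eq_of_card_lt_of_maps_to (by simpa using hc) hmaps
      rw [Finset.mem_range] at hi hj
      have main : ∀ i j : ℕ, i < j → j < l.length → wrd (l.take i) = wrd (l.take j) →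
          ∃ l', l'.length ≤ T.card ∧ ok F A l' x ∧ wrd l' ∉ (T : Set Γ) := by
        intro i j hij hjl heq
        have hsplitj := (ok_append (l.take j) (l.drop j) x).1 (by rwa [List.take_append_drop])
        have hoki : ok F A (l.take i) x := by
          have := (ok_append (l.take i) (l.drop i) x).1 (by rwa [List.take_append_drop])
          exact this.1
        have hokl' : ok F A (l.take i ++ l.drop j) x := by
          rw [ok_append]
          exact ⟨hoki, by rw [heq]; exact hsplitj.2⟩
        have hwl' : wrd (l.take i ++ l.drop j) = wrd l := by
          rw [wrd_append, heq, ← wrd_append, List.take_append_drop]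
        refine ih (l.take i ++ l.drop j) x ?_ hokl' (by rwa [hwl'])
        simp only [List.length_append, List.length_take, List.length_drop]
        omega
      rcases lt_or_gt_of_ne hne with hij | hij
      · exact main i j hij hj heq
      · exact main j i hij hi heq.symm

lemma ok_replicate_one {F : Set Γ} {A : Set X} (h1 : (1:Γ) ∈ F) {y : X} (hy : y ∈ A) :
    ∀ j : ℕ, ok F A (List.replicate j (1:Γ)) y := by
  intro j
  induction j with
  | zero => exact hy
  | succ j ih => exact ⟨hy, h1, by simpa using ih⟩

lemma wrd_replicate_one : ∀ j : ℕ, wrd (List.replicate j (1:Γ)) = 1 := by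
  intro j
  induction j with
  | zero => rfl
  | succ j ih => simp [List.replicate_succ, ih]


open Filter Topology

lemma mem_of_tendsto_thickening {X : Type*} [MetricSpace X] {U : Set X} (hU : IsClosed U)
    {y : ℕ → X} {Y : X} (hy : Tendsto y atTop (𝓝 Y)) {e : ℕ → ℝ}
    (he : Tendsto e atTop (𝓝 0)) (hm : ∀ k, y k ∈ Metric.thickening (e k) U) : Y ∈ U := by
  rw [← hU.closure_eq, Metric.mem_closure_iff]
  intro δ hδ
  have h1 : ∀ᶠ k in atTop, dist (y k) Y < δ / 2 :=
    (Metric.tendsto_nhds.1 hy) (δ / 2) (by positivity)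
  have h2 : ∀ᶠ k in atTop, e k < δ / 2 :=
    he.eventually (gt_mem_nhds (by positivity))
  obtain ⟨k, hk1, hk2⟩ := (h1.and h2).exists
  obtain ⟨u, hu, hdu⟩ := Metric.mem_thickening_iff.1 (hm k)
  exact ⟨u, hu, by
    calc dist Y u ≤ dist Y (y k) + dist (y k) u := dist_triangle _ _ _
    _ < δ / 2 + δ / 2 := by rw [dist_comm Y (y k)]; exact add_lt_add hk1 (hdu.trans hk2)
    _ = δ := by ring⟩

lemma ok_limit {Γ X : Type*} [Group Γ] [MulAction Γ X] [MetricSpace X] {F : Set Γ}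
    (hcont : ∀ γ : Γ, Continuous (fun x : X => γ • x))
    {U : Set X} (hU : IsClosed U) {e : ℕ → ℝ} (he : Tendsto e atTop (𝓝 0)) :
    ∀ (l : List Γ) (y : ℕ → X) (Y : X), Tendsto y atTop (𝓝 Y) →
      (∀ k, ok F (Metric.thickening (e k) U) l (y k)) → ok F U l Y := by
  intro l
  induction l with
  | nil =>
    intro y Y hy h
    exact mem_of_tendsto_thickening hU hy he h
  | cons f l ih =>
    intro y Y hy h
    refine ⟨mem_of_tendsto_thickening hU hy he (fun k => (h k).1), (h 0).2.1, ?_⟩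
    exact ih (fun k => f • y k) (f • Y) (((hcont f).tendsto Y).comp hy) (fun k => (h k).2.2)

end Stmt3Aux

open Stmt3Aux Filter Topology

/-- If `U` is closed with `S`-bounded `F`-components, then some open `ε`-neighborhood
of `U` also has `S`-bounded `F`-components. -/
theorem stmt3 {Γ X : Type*} [Group Γ] [Countable Γ] [MetricSpace X] [CompactSpace X]
    [MulAction Γ X] (hcont : ∀ γ : Γ, Continuous (fun x : X => γ • x))
    (hfree : ∀ (γ : Γ) (x : X), γ • x = x → γ = 1)
    (F S : Finset Γ) (hFe : (1 : Γ) ∈ F) (hFsym : ∀ f ∈ F, f⁻¹ ∈ F)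
    (hSe : (1 : Γ) ∈ S) (hSsym : ∀ s ∈ S, s⁻¹ ∈ S)
    (U : Set X) (hU : IsClosed U)
    (hbdd : ∀ x ∈ U, SBdd (S : Set Γ) (AComp (F : Set Γ) U x)) :
    ∃ ε : ℝ, 0 < ε ∧ ∀ x ∈ Metric.thickening ε U,
      SBdd (S : Set Γ) (AComp (F : Set Γ) (Metric.thickening ε U) x) := by
  classical
  by_contra hcon
  push_neg at hcon
  set m := S.card with hm
  have hsel : ∀ n : ℕ, ∃ x ∈ Metric.thickening (1 / (n + 1) : ℝ) U,
      ¬ SBdd (S : Set Γ) (AComp (F : Set Γ) (Metric.thickening (1 / (n + 1) : ℝ) U) x) := by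
    intro n
    obtain ⟨x, hx⟩ := hcon (1 / (n + 1) : ℝ) (by positivity)
    exact ⟨x, hx.1, hx.2⟩
  choose x hxU hxbad using hsel
  -- convergent subsequence
  obtain ⟨Y, -, φ, hφ, hlim⟩ := isCompact_univ.tendsto_subseq (x := x) (fun n => Set.mem_univ _)
  have he0 : Tendsto (fun k : ℕ => (1 : ℝ) / (φ k + 1)) atTop (𝓝 0) := by
    apply squeeze_zero (fun k => by positivity) (g := fun k : ℕ => (1 : ℝ) / (k + 1))
    · intro k
      apply one_div_le_one_div_of_le (by positivity)
      have h1 : k ≤ φ k := hφ.le_apply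
      have h2 : (k : ℝ) ≤ φ k := Nat.cast_le.mpr h1
      linarith
    · exact tendsto_one_div_add_atTop_nhds_zero_nat
  have hYU : Y ∈ U :=
    mem_of_tendsto_thickening hU hlim he0 (fun k => hxU (φ k))
  obtain ⟨z, hz⟩ := hbdd Y hYU
  have hYz : Y ∈ (fun s : Γ => s • z) '' S := hz Relation.ReflTransGen.refl
  obtain ⟨s₀, hs₀S, hs₀⟩ := hYz
  set T : Finset Γ := S.image (· * s₀⁻¹) with hT
  have hTm : T.card ≤ m := Finset.card_image_le
  -- for each k, a chain of length exactly m whose word escapes T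
  have key : ∀ k : ℕ, ∃ l : List Γ, l.length = m ∧
      ok (F : Set Γ) (Metric.thickening (1 / (φ k + 1) : ℝ) U) l (x (φ k)) ∧
      wrd l ∉ (T : Set Γ) := by
    intro k
    have hbad := hxbad (φ k)
    rw [SBdd] at hbad
    push_neg at hbad
    obtain ⟨y, hyA, hyn⟩ := Set.not_subset.1 (hbad (s₀⁻¹ • x (φ k)))
    obtain ⟨l, hok, hend⟩ := exists_list_of_mem_AComp (hxU (φ k)) hyA
    have hwT : wrd l ∉ (T : Set Γ) := by
      intro hmem
      rw [Finset.coe_image] at hmem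
      obtain ⟨s, hs, hws⟩ := hmem
      refine hyn ⟨s, hs, ?_⟩
      show s • (s₀⁻¹ • x (φ k)) = y
      rw [← mul_smul, show s * s₀⁻¹ = wrd l from hws, hend]
    obtain ⟨l', hlen', hok', hT'⟩ := shorten T l.length l (x (φ k)) le_rfl hok hwT
    refine ⟨l' ++ List.replicate (m - l'.length) 1, ?_, ?_, ?_⟩
    · simp only [List.length_append, List.length_replicate]
      omega
    · rw [ok_append]
      exact ⟨hok', ok_replicate_one hFe hok'.end_mem _⟩
    · rwa [wrd_append, wrd_replicate_one, one_mul]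
  choose L hLlen hLok hLT using key
  have hmemF : ∀ (k : ℕ) (f : Γ), f ∈ L k → f ∈ F := fun k => (hLok k).steps
  let E : ℕ → (Fin m → {f // f ∈ F}) := fun k i =>
    ⟨(L k).get ⟨i.1, by rw [hLlen k]; exact i.2⟩, hmemF k _ (List.get_mem _ _)⟩
  obtain ⟨a, ha⟩ := Finite.exists_infinite_fiber E
  have hinf : {k | E k = a}.Infinite := by
    rw [← Set.infinite_coe_iff]
    exact ha
  obtain ⟨ψ, hψ, hEψ⟩ := extraction_of_frequently_atTop (Nat.frequently_atTop_iff_infinite.2 hinf)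
  have hLeq : ∀ k, L (ψ k) = L (ψ 0) := by
    intro k
    apply List.ext_get (by rw [hLlen, hLlen])
    intro i h1 h2
    have e1 := congrFun (hEψ k) ⟨i, by rw [← hLlen (ψ k)]; exact h1⟩
    have e0 := congrFun (hEψ 0) ⟨i, by rw [← hLlen (ψ 0)]; exact h2⟩
    exact congrArg Subtype.val (e1.trans e0.symm)
  set l₀ := L (ψ 0) with hl₀
  have hφψ : Tendsto (fun k => x (φ (ψ k))) atTop (𝓝 Y) := hlim.comp hψ.tendsto_atTop
  have he2 : Tendsto (fun k : ℕ => (1 : ℝ) / (φ (ψ k) + 1)) atTop (𝓝 0) :=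
    he0.comp hψ.tendsto_atTop
  have hok0 : ok (F : Set Γ) U l₀ Y :=
    ok_limit hcont hU he2 l₀ (fun k => x (φ (ψ k))) Y hφψ
      (fun k => hLeq k ▸ hLok (ψ k))
  obtain ⟨s, hsS, hsz⟩ := hz (smul_mem_AComp hok0)
  have hzeq : z = s₀⁻¹ • Y := by rw [← hs₀]; exact (inv_smul_smul s₀ z).symm
  have hpt : (s * s₀⁻¹) • Y = wrd l₀ • Y := by rw [mul_smul, ← hzeq]; exact hsz
  have hgrp : (wrd l₀)⁻¹ * (s * s₀⁻¹) = 1 :=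
    hfree _ Y (by rw [mul_smul, hpt, inv_smul_smul])
  have hw : wrd l₀ = s * s₀⁻¹ := inv_mul_eq_one.1 hgrp
  exact hLT (ψ 0) (by
    rw [hw]
    exact Finset.mem_coe.2 (Finset.mem_image_of_mem _ (Finset.mem_coe.1 hsS)))
end

section
/- Let Γ act freely by homeomorphisms on a compact metric space X, let U ⊆ X be closed with F-components S-bounded, and for x ∈ U let S^x ⊆ Γ be the unique set with S^x·x equal to the F-component of x in U. Then each x ∈ U has an open neighborhood U^x in X such that whenever s ∈ S^x, f ∈ F, and fs ∉ S^x, the distance d(fs·U^x, U) is strictly positive. -/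
open Metric Filter Topology
open scoped Pointwise

theorem exists_isOpen_forall_le_dist_of_notMem {ι X Y : Type*} [TopologicalSpace X]
    [PseudoMetricSpace Y] {B : Set ι} (hB : B.Finite) {φ : ι → X → Y}
    (hφ : ∀ i ∈ B, Continuous (φ i)) {U : Set Y} (hU : IsClosed U) (hUne : U.Nonempty) {x : X}
    (hxU : ∀ i ∈ B, φ i x ∉ U) :
    ∃ W : Set X, IsOpen W ∧ x ∈ W ∧
      ∀ i ∈ B, ∃ δ : ℝ, 0 < δ ∧ ∀ z ∈ W, ∀ u ∈ U, δ ≤ dist (φ i z) u := by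
  have hpos : ∀ i ∈ B, 0 < infDist (φ i x) U := fun i hi =>
    (hU.notMem_iff_infDist_pos hUne).mp (hxU i hi)
  have hnear : ∀ᶠ z in 𝓝 x, ∀ i ∈ B, infDist (φ i x) U / 2 < infDist (φ i z) U := by
    refine (eventually_all_finite hB).mpr fun i hi => ?_
    exact ((continuous_infDist_pt U).comp (hφ i hi)).continuousAt.eventually_const_lt
      (half_lt_self (hpos i hi))
  obtain ⟨W, hWnear, hW, hxW⟩ := mem_nhds_iff.mp hnear
  refine ⟨W, hW, hxW, fun i hi => ⟨_, half_pos (hpos i hi), fun z hz u hu => ?_⟩⟩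
  exact ((hWnear hz i hi).trans_le (infDist_le_dist_of_mem hu)).le

section Components

variable {Γ X : Type*}

theorem AComp_subset [SMul Γ X] {F : Set Γ} {A : Set X} {x : X} (hx : x ∈ A) :
    AComp F A x ⊆ A := by
  intro y hy
  induction hy with
  | refl => exact hx
  | tail _ hstep _ => exact hstep.2.1

theorem smul_mem_AComp [SMul Γ X] {F : Set Γ} {A : Set X} {x y : X} {f : Γ} (hx : x ∈ A)
    (hy : y ∈ AComp F A x) (hf : f ∈ F) (hfy : f • y ∈ A) : f • y ∈ AComp F A x :=
  hy.tail ⟨AComp_subset hx hy, hfy, f, hf, rfl⟩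

variable [Group Γ] [MulAction Γ X]

theorem smul_left_injective_of_free (hfree : ∀ (γ : Γ) (x : X), γ • x = x → γ = 1) (x : X) :
    Function.Injective (fun γ : Γ => γ • x) := by
  intro γ δ h
  have hfix : (δ⁻¹ * γ) • x = x := by
    rw [mul_smul, show γ • x = δ • x from h, inv_smul_smul]
  exact (inv_mul_eq_one.mp (hfree _ _ hfix)).symm

theorem finite_of_image_eq_AComp (hfree : ∀ (γ : Γ) (x : X), γ • x = x → γ = 1)
    {F S T : Set Γ} {A : Set X} {x : X} (hS : S.Finite) (hbdd : SBdd S (AComp F A x))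
    (hT : (fun γ : Γ => γ • x) '' T = AComp F A x) : T.Finite := by
  obtain ⟨z, hz⟩ := hbdd
  refine Set.Finite.of_finite_image ?_ (smul_left_injective_of_free hfree x).injOn
  rw [hT]
  exact (hS.image _).subset hz

theorem mul_smul_notMem_of_image_eq_AComp (hfree : ∀ (γ : Γ) (x : X), γ • x = x → γ = 1)
    {F T : Set Γ} {A : Set X} {x : X} (hx : x ∈ A)
    (hT : (fun γ : Γ => γ • x) '' T = AComp F A x) {f s : Γ} (hf : f ∈ F) (hs : s ∈ T)
    (hfs : f * s ∉ T) : (f * s) • x ∉ A := by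
  intro hfsA
  have hsx : s • x ∈ AComp F A x := hT ▸ Set.mem_image_of_mem _ hs
  have hfsx : (f * s) • x ∈ AComp F A x := by
    rw [mul_smul] at hfsA ⊢
    exact smul_mem_AComp hx hsx hf hfsA
  obtain ⟨γ, hγ, hγx⟩ := hT ▸ hfsx
  exact hfs (smul_left_injective_of_free hfree x hγx ▸ hγ)

end Components

theorem stmt4_general {Γ X : Type*} [Group Γ] [MetricSpace X]
    [MulAction Γ X] (hcont : ∀ γ : Γ, Continuous (fun x : X => γ • x))
    (hfree : ∀ (γ : Γ) (x : X), γ • x = x → γ = 1)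
    (F S : Finset Γ)
    (U : Set X) (hU : IsClosed U)
    (hbdd : ∀ x ∈ U, SBdd (S : Set Γ) (AComp (F : Set Γ) U x))
    (Sx : X → Set Γ)
    (hSx : ∀ x ∈ U, (fun γ : Γ => γ • x) '' Sx x = AComp (F : Set Γ) U x) :
    ∀ x ∈ U, ∃ W : Set X, IsOpen W ∧ x ∈ W ∧
      ∀ s ∈ Sx x, ∀ f ∈ F, f * s ∉ Sx x →
        ∃ δ : ℝ, 0 < δ ∧ ∀ z ∈ W, ∀ u ∈ U, δ ≤ dist ((f * s) • z) u := by
  intro x hx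
  have hSxfin : (Sx x).Finite :=
    finite_of_image_eq_AComp hfree S.finite_toSet (hbdd x hx) (hSx x hx)
  have hexits : ∀ g ∈ ((F : Set Γ) * Sx x) \ Sx x, g • x ∉ U := by
    rintro _ ⟨⟨f, hf, s, hs, rfl⟩, hfs⟩
    exact mul_smul_notMem_of_image_eq_AComp hfree hx (hSx x hx) hf hs hfs
  obtain ⟨W, hW, hxW, hfar⟩ := exists_isOpen_forall_le_dist_of_notMem
    ((F.finite_toSet.mul hSxfin).sdiff) (fun g _ => hcont g) hU ⟨x, hx⟩ hexits
  exact ⟨W, hW, hxW, fun s hs f hf hfs => hfar (f * s) ⟨Set.mul_mem_mul hf hs, hfs⟩⟩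

/-- Each `x ∈ U` has an open neighborhood `W` such that if `s ∈ Sˣ`, `f ∈ F` but
`f * s ∉ Sˣ`, then `d((f*s) • W, U) > 0`. -/
theorem stmt4 {Γ X : Type*} [Group Γ] [Countable Γ] [MetricSpace X] [CompactSpace X]
    [MulAction Γ X] (hcont : ∀ γ : Γ, Continuous (fun x : X => γ • x))
    (hfree : ∀ (γ : Γ) (x : X), γ • x = x → γ = 1)
    (F S : Finset Γ) (hFe : (1 : Γ) ∈ F) (hFsym : ∀ f ∈ F, f⁻¹ ∈ F)
    (hSe : (1 : Γ) ∈ S) (hSsym : ∀ s ∈ S, s⁻¹ ∈ S)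
    (U : Set X) (hU : IsClosed U)
    (hbdd : ∀ x ∈ U, SBdd (S : Set Γ) (AComp (F : Set Γ) U x))
    (Sx : X → Set Γ)
    (hSx : ∀ x ∈ U, (fun γ : Γ => γ • x) '' Sx x = AComp (F : Set Γ) U x) :
    ∀ x ∈ U, ∃ W : Set X, IsOpen W ∧ x ∈ W ∧
      ∀ s ∈ Sx x, ∀ f ∈ F, f * s ∉ Sx x →
        ∃ δ : ℝ, 0 < δ ∧ ∀ z ∈ W, ∀ u ∈ U, δ ≤ dist ((f * s) • z) u :=
  stmt4_general hcont hfree F S U hU hbdd Sx hSx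
end

section
/- Let Γ act freely by homeomorphisms on a compact metric space X and fix x ∈ X. For finite symmetric F, S ⊆ Γ containing e, any cover of X by d+1 (arbitrary) sets whose F-components are S-bounded induces, by restriction to the orbit Γ·x identified with Γ, a cover of Γ by d+1 sets whose F-components (with respect to left multiplication) are contained in left translates of S. -/
/-- The `F`-component of `γ` in `A ⊆ Γ` for left multiplication. -/
def GComp {Γ : Type*} [Group Γ] (F : Set Γ) (A : Set Γ) (x : Γ) : Set Γ :=
  {y | Relation.ReflTransGen (fun a b => a ∈ A ∧ b ∈ A ∧ ∃ f ∈ F, b = f * a) x y}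

/-- A cover of `X` by `d+1` sets with `S`-bounded `F`-components induces, on the
orbit of `x` identified with `Γ`, a cover of `Γ` by `d+1` sets whose
`F`-components lie in left translates of `S`. -/
theorem stmt6 {Γ X : Type*} [Group Γ] [Countable Γ] [MetricSpace X] [CompactSpace X]
    [MulAction Γ X] (hcont : ∀ γ : Γ, Continuous (fun x : X => γ • x))
    (hfree : ∀ (γ : Γ) (x : X), γ • x = x → γ = 1)
    (x : X) (F S : Finset Γ)
    (hFe : (1 : Γ) ∈ F) (hFsym : ∀ f ∈ F, f⁻¹ ∈ F)
    (hSe : (1 : Γ) ∈ S) (hSsym : ∀ s ∈ S, s⁻¹ ∈ S)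
    (d : ℕ) (U : Fin (d + 1) → Set X) (hcover : (⋃ i, U i) = Set.univ)
    (hbdd : ∀ i : Fin (d + 1), ∀ y ∈ U i, SBdd (S : Set Γ) (AComp (F : Set Γ) (U i) y)) :
    (⋃ i, {γ : Γ | γ • x ∈ U i}) = Set.univ ∧
      ∀ i : Fin (d + 1), ∀ γ ∈ {γ : Γ | γ • x ∈ U i},
        ∃ z : Γ, GComp (F : Set Γ) {γ : Γ | γ • x ∈ U i} γ ⊆ (fun s : Γ => s * z) '' S := by
  constructor
  · ext γ
    simp only [Set.mem_iUnion, Set.mem_setOf_eq, Set.mem_univ, iff_true]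
    have : γ • x ∈ ⋃ i, U i := hcover ▸ Set.mem_univ _
    exact Set.mem_iUnion.mp this
  · intro i γ hγ
    -- map GComp to AComp via δ ↦ δ • x
    have hmap : ∀ δ ∈ GComp (F : Set Γ) {γ : Γ | γ • x ∈ U i} γ,
        δ • x ∈ AComp (F : Set Γ) (U i) (γ • x) := by
      intro δ hδ
      refine Relation.ReflTransGen.lift (fun g : Γ => g • x) ?_ _ _ hδ
      rintro a b ⟨ha, hb, f, hf, rfl⟩
      exact ⟨ha, hb, f, hf, (mul_smul f a x)⟩
    obtain ⟨z, hz⟩ := hbdd i (γ • x) hγ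
    have hγmem : γ • x ∈ AComp (F : Set Γ) (U i) (γ • x) := Relation.ReflTransGen.refl
    obtain ⟨s, hs, hsz⟩ := hz hγmem
    refine ⟨s⁻¹ * γ, ?_⟩
    intro δ hδ
    obtain ⟨t, ht, htz⟩ := hz (hmap δ hδ)
    refine ⟨t, ht, ?_⟩
    have hzx : z = (s⁻¹ * γ) • x := by
      rw [mul_smul]
      exact (inv_smul_eq_iff.mpr hsz.symm).symm
    have : δ • x = (t * (s⁻¹ * γ)) • x := by
      rw [mul_smul, ← hzx]; exact htz.symm
    have h1 : ((t * (s⁻¹ * γ))⁻¹ * δ) • x = x := by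
      rw [mul_smul, this, ← mul_smul, inv_mul_cancel, one_smul]
    have h2 := hfree _ _ h1
    have : δ = t * (s⁻¹ * γ) := by
      have := mul_eq_of_eq_inv_mul (a := (t * (s⁻¹ * γ))) h2.symm
      simpa using this.symm
    exact this.symm
end
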